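/- arXiv:2406.13182 — 4 statements merged into one kernel-verified Lean document; each statement's English description precedes it below -/
import Mathlib

section
/- Let X be a real-valued random variable and let s, s̃ be real numbers for which the tilted distributions X^(s), X^(s̃) exist and have finite means. If E[X^(s)] = E[X^(s̃)], then X^(s) and X^(s̃) have the same distribution. -/
open MeasureTheory ProbabilityTheory Real

/-!
Write `u = s' - s > 0`; tilting by `s'` is tilting `P = X^(s)` by `u`. The mean of that tilt is
`E_P[x e^{ux}] / E_P[e^{ux}]`, so equal means say that `x` and the strictly increasing `e^{ux}` are
uncorrelated under `P`. For strictly increasing `g` and `m = E_P[x]`, that covariance is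
`E_P[(x - m)(g x - g m)]`, whose integrand is nonnegative and vanishes only at `m`; hence `P` is
the point mass at `m`, which every tilt leaves unchanged.
-/

lemma ae_eq_integral_id_of_integral_mul_eq {P : Measure ℝ} [IsProbabilityMeasure P]
    {g : ℝ → ℝ} (hg : StrictMono g) (hid : Integrable (fun x => x) P) (hgi : Integrable g P)
    (hmul : Integrable (fun x => x * g x) P)
    (hcov : ∫ x, x * g x ∂P = (∫ x, x ∂P) * ∫ x, g x ∂P) :
    ∀ᵐ x ∂P, x = ∫ x, x ∂P := by
  set m := ∫ x, x ∂P
  have hpos : ∀ x, x ≠ m → 0 < (x - m) * (g x - g m) := by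
    intro x hx
    rcases hx.lt_or_gt with hlt | hlt
    · exact mul_pos_of_neg_of_neg (sub_neg.mpr hlt) (sub_neg.mpr (hg hlt))
    · exact mul_pos (sub_pos.mpr hlt) (sub_pos.mpr (hg hlt))
  have hnonneg : 0 ≤ fun x => (x - m) * (g x - g m) := fun x => by
    rcases eq_or_ne x m with rfl | hx
    · simp
    · exact (hpos x hx).le
  have hexpand : (fun x => (x - m) * (g x - g m))
      = fun x => x * g x - m * g x - (g m * x - m * g m) := by
    funext x; ring
  have hint₁ : Integrable (fun x => x * g x - m * g x) P := hmul.sub (hgi.const_mul m)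
  have hint₂ : Integrable (fun x => g m * x - m * g m) P :=
    (hid.const_mul (g m)).sub (integrable_const _)
  have hint : Integrable (fun x => (x - m) * (g x - g m)) P := by
    rw [hexpand]; exact hint₁.sub hint₂
  have hzero : ∫ x, (x - m) * (g x - g m) ∂P = 0 := by
    rw [hexpand, integral_sub hint₁ hint₂, integral_sub hmul (hgi.const_mul m),
      integral_sub (hid.const_mul (g m)) (integrable_const _), integral_const_mul,
      integral_const_mul, integral_const, hcov]
    simp only [probReal_univ, one_smul]
    ring
  filter_upwards [(integral_eq_zero_iff_of_nonneg hnonneg hint).mp hzero] with x hx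
  by_contra hne
  exact (hpos x hne).ne' hx

lemma tilted_mul_eq_self_of_integral_id_eq {P : Measure ℝ} [IsProbabilityMeasure P] {u : ℝ}
    (hu : 0 < u) (hexp : Integrable (fun x => exp (u * x)) P) (hid : Integrable (fun x => x) P)
    (hid' : Integrable (fun x => x) (P.tilted (u * ·)))
    (hmean : ∫ x, x ∂(P.tilted (u * ·)) = ∫ x, x ∂P) :
    P.tilted (u * ·) = P := by
  have hmul : Integrable (fun x => x * exp (u * x)) P := by
    simpa only [smul_eq_mul, mul_comm] using (integrable_tilted_iff hexp _).mp hid'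
  have hcov : ∫ x, x * exp (u * x) ∂P = (∫ x, x ∂P) * ∫ x, exp (u * x) ∂P := by
    have hM := (integral_exp_pos hexp).ne'
    rw [← hmean, integral_tilted]
    simp only [smul_eq_mul, div_mul_eq_mul_div]
    rw [integral_div, div_mul_cancel₀ _ hM]
    simp only [mul_comm]
  have hconst := ae_eq_integral_id_of_integral_mul_eq
    (fun a b hab => exp_lt_exp.mpr (mul_lt_mul_of_pos_left hab hu)) hid hexp hmul hcov
  rw [tilted_congr (g := fun _ => u * ∫ x, x ∂P) (by filter_upwards [hconst] with x hx; rw [hx]),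
    tilted_const]

lemma tilted_mul_eq_of_integral_id_eq_of_lt {ν : Measure ℝ} [IsProbabilityMeasure ν] {s s' : ℝ}
    (hlt : s < s') (hs : Integrable (fun x => exp (s * x)) ν)
    (hs' : Integrable (fun x => exp (s' * x)) ν)
    (hms : Integrable (fun x => x) (ν.tilted (s * ·)))
    (hms' : Integrable (fun x => x) (ν.tilted (s' * ·)))
    (hmean : ∫ x, x ∂(ν.tilted (s * ·)) = ∫ x, x ∂(ν.tilted (s' * ·))) :
    ν.tilted (s * ·) = ν.tilted (s' * ·) := by
  have : IsProbabilityMeasure (ν.tilted (s * ·)) := isProbabilityMeasure_tilted hs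
  have hexp_add : ∀ x, exp (s * x) * exp ((s' - s) * x) = exp (s' * x) := fun x => by
    rw [← exp_add]; ring_nf
  have htilt : ν.tilted (s' * ·) = (ν.tilted (s * ·)).tilted ((s' - s) * ·) := by
    rw [tilted_tilted hs]
    congr 1 with x
    simp only [Pi.add_apply]
    ring
  have hexp : Integrable (fun x => exp ((s' - s) * x)) (ν.tilted (s * ·)) := by
    rw [integrable_tilted_iff hs]
    simpa only [smul_eq_mul, hexp_add] using hs'
  rw [htilt] at hms' hmean ⊢
  exact (tilted_mul_eq_self_of_integral_id_eq (sub_pos.mpr hlt) hexp hms hms' hmean.symm).symm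

/-- (Tilted distributions are determined by their means, real case.)
If the tilted distributions `X^(s)` and `X^(s̃)` exist and have finite means which are equal,
then they have the same distribution. -/
theorem tilted_eq_of_mean_eq
    {Ω : Type*} [MeasurableSpace Ω] (μ : Measure Ω) [IsProbabilityMeasure μ]
    (X : Ω → ℝ) (hX : Measurable X) (s s' : ℝ)
    (hs : Integrable (fun ω => Real.exp (s * X ω)) μ)
    (hs' : Integrable (fun ω => Real.exp (s' * X ω)) μ)
    (hms : Integrable (fun x => x) ((μ.map X).tilted (fun x => s * x)))
    (hms' : Integrable (fun x => x) ((μ.map X).tilted (fun x => s' * x)))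
    (hmean : (∫ x, x ∂((μ.map X).tilted (fun x => s * x)))
        = ∫ x, x ∂((μ.map X).tilted (fun x => s' * x))) :
    (μ.map X).tilted (fun x => s * x) = (μ.map X).tilted (fun x => s' * x) := by
  have : IsProbabilityMeasure (μ.map X) := Measure.isProbabilityMeasure_map hX.aemeasurable
  have hmap : ∀ t, Integrable (fun ω => exp (t * X ω)) μ →
      Integrable (fun x => exp (t * x)) (μ.map X) := fun t ht =>
    (integrable_map_measure (by fun_prop) hX.aemeasurable).mpr ht
  rcases lt_trichotomy s s' with hlt | rfl | hgt
  · exact tilted_mul_eq_of_integral_id_eq_of_lt hlt (hmap s hs) (hmap s' hs') hms hms' hmean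
  · rfl
  · exact (tilted_mul_eq_of_integral_id_eq_of_lt hgt (hmap s' hs') (hmap s hs) hms' hms
      hmean.symm).symm
end

section
/- Let X be an ℝ^d-valued random variable, and s, s̃ row vectors for which the tilted distributions X^(s), X^(s̃) exist with finite means. If E[X^(s)] = E[X^(s̃)], then X^(s) = X^(s̃) in distribution. -/
/-!
Write `ρ` for the law of `X` tilted by `s` and `g x = ⟪s' - s, x⟫`, so that the law of `X` tilted
by `s'` is `ρ` tilted by `g`. With `Z = ∫ e^g dρ`, equality of the means of `g` under `ρ` and under
`ρ` tilted by `g` says `∫ (g - log Z) (e^g - Z) dρ = 0`. The integrand is nonnegative, since `exp`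
is increasing, so `g = log Z` holds `ρ`-a.e. and tilting `ρ` by `g` does nothing.
-/

open MeasureTheory ProbabilityTheory Real
open scoped RealInnerProductSpace

lemma mul_sub_exp_sub_exp_nonneg (a b : ℝ) : 0 ≤ (a - b) * (exp a - exp b) := by
  rcases le_total a b with hab | hab
  · exact mul_nonneg_of_nonpos_of_nonpos (sub_nonpos.2 hab) (sub_nonpos.2 (exp_le_exp.2 hab))
  · exact mul_nonneg (sub_nonneg.2 hab) (sub_nonneg.2 (exp_le_exp.2 hab))

lemma mul_sub_exp_sub_exp_eq_zero_iff {a b : ℝ} : (a - b) * (exp a - exp b) = 0 ↔ a = b := by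
  simp [mul_eq_zero, sub_eq_zero]

namespace MeasureTheory.Measure

variable {α : Type*} [MeasurableSpace α] {μ : Measure α} {g : α → ℝ}

lemma integral_exp_mul_eq_mul_integral_tilted [NeZero μ] (hg : Integrable (fun x ↦ exp (g x)) μ) :
    ∫ x, exp (g x) * g x ∂μ = (∫ x, exp (g x) ∂μ) * ∫ x, g x ∂(μ.tilted g) := by
  simp_rw [integral_tilted, smul_eq_mul, div_mul_eq_mul_div, integral_div]
  field_simp [(integral_exp_pos hg).ne']

variable [IsProbabilityMeasure μ]

lemma ae_eq_log_integral_exp_of_integral_tilted_eq (hg : Integrable (fun x ↦ exp (g x)) μ)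
    (hgμ : Integrable g μ) (hgt : Integrable g (μ.tilted g))
    (hmean : ∫ x, g x ∂(μ.tilted g) = ∫ x, g x ∂μ) :
    g =ᵐ[μ] fun _ ↦ log (∫ x, exp (g x) ∂μ) := by
  set Z := ∫ x, exp (g x) ∂μ
  have hZ : exp (log Z) = Z := exp_log (integral_exp_pos hg)
  have hge : Integrable (fun x ↦ exp (g x) * g x) μ := (integrable_tilted_iff hg g).1 hgt
  set F : α → ℝ := fun x ↦ (g x - log Z) * (exp (g x) - exp (log Z))
  have hF : F = fun x ↦ exp (g x) * g x - Z * g x - (log Z * exp (g x) - log Z * Z) := by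
    ext x; simp only [F, hZ]; ring
  have h₁ : Integrable (fun x ↦ exp (g x) * g x - Z * g x) μ := hge.sub (hgμ.const_mul Z)
  have h₂ : Integrable (fun x ↦ log Z * exp (g x) - log Z * Z) μ :=
    (hg.const_mul _).sub (integrable_const _)
  have hF_int : Integrable F μ := hF ▸ h₁.sub h₂
  have hF_zero : ∫ x, F x ∂μ = 0 := by
    simp only [hF]
    rw [integral_sub h₁ h₂, integral_sub hge (hgμ.const_mul Z),
      integral_sub (hg.const_mul _) (integrable_const _), integral_const_mul, integral_const_mul,
      integral_const_mul, integral_const, probReal_univ, one_smul,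
      integral_exp_mul_eq_mul_integral_tilted hg, hmean]
    ring
  filter_upwards [(integral_eq_zero_iff_of_nonneg (fun x ↦ mul_sub_exp_sub_exp_nonneg _ _)
    hF_int).1 hF_zero] with x hx
  exact mul_sub_exp_sub_exp_eq_zero_iff.1 hx

lemma tilted_eq_self_of_integral_tilted_eq (hg : Integrable (fun x ↦ exp (g x)) μ)
    (hgμ : Integrable g μ) (hgt : Integrable g (μ.tilted g))
    (hmean : ∫ x, g x ∂(μ.tilted g) = ∫ x, g x ∂μ) :
    μ.tilted g = μ := by
  rw [tilted_congr (ae_eq_log_integral_exp_of_integral_tilted_eq hg hgμ hgt hmean), tilted_const]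

end MeasureTheory.Measure

open Measure in
theorem tilted_eq_of_integral_tilted_eq {E : Type*} [NormedAddCommGroup E] [NormedSpace ℝ E]
    [CompleteSpace E] [MeasurableSpace E] {ν : Measure E} [IsProbabilityMeasure ν]
    (L L' : StrongDual ℝ E)
    (hL : Integrable (fun x ↦ exp (L x)) ν) (hL' : Integrable (fun x ↦ exp (L' x)) ν)
    (hm : Integrable (fun x ↦ x) (ν.tilted L)) (hm' : Integrable (fun x ↦ x) (ν.tilted L'))
    (hmean : ∫ x, x ∂(ν.tilted L) = ∫ x, x ∂(ν.tilted L')) :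
    ν.tilted L = ν.tilted L' := by
  set ρ := ν.tilted L
  have : IsProbabilityMeasure ρ := isProbabilityMeasure_tilted hL
  have hρ : ρ.tilted ⇑(L' - L) = ν.tilted L' := by
    rw [tilted_tilted hL]
    congr 1
    ext x
    simp
  have hexp : Integrable (fun x ↦ exp ((L' - L) x)) ρ := by
    refine (integrable_tilted_iff hL _).2 (hL'.congr (ae_of_all _ fun x ↦ ?_))
    simp [← exp_add]
  have hgρ : Integrable (L' - L) ρ := (L' - L).integrable_comp hm
  have hgρ' : Integrable (L' - L) (ρ.tilted ⇑(L' - L)) := hρ ▸ (L' - L).integrable_comp hm'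
  have hmean' : ∫ x, (L' - L) x ∂(ρ.tilted ⇑(L' - L)) = ∫ x, (L' - L) x ∂ρ := by
    rw [hρ, (L' - L).integral_comp_comm hm', (L' - L).integral_comp_comm hm, hmean]
  rw [← hρ, tilted_eq_self_of_integral_tilted_eq hexp hgρ hgρ' hmean']

/-- (Tilted distributions are determined by their means, `ℝ^d` case.)
Let `X` be `ℝ^d`-valued, and `s, s̃` (row) vectors such that the tilted distributions
`X^(s)`, `X^(s̃)` (densities `e^{s·x}/M_X(s)` relative to the law of `X`) exist and have
finite means. If the means agree, the tilted distributions are equal. -/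
theorem tilted_eq_of_mean_eq_multivariate
    {Ω : Type*} [MeasurableSpace Ω] (μ : Measure Ω) [IsProbabilityMeasure μ]
    {d : ℕ} (X : Ω → EuclideanSpace ℝ (Fin d)) (hX : Measurable X)
    (s s' : EuclideanSpace ℝ (Fin d))
    (hs : Integrable (fun ω => Real.exp (⟪s, X ω⟫)) μ)
    (hs' : Integrable (fun ω => Real.exp (⟪s', X ω⟫)) μ)
    (hms : Integrable (fun x => x) ((μ.map X).tilted (fun x => ⟪s, x⟫)))
    (hms' : Integrable (fun x => x) ((μ.map X).tilted (fun x => ⟪s', x⟫)))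
    (hmean : (∫ x, x ∂((μ.map X).tilted (fun x => ⟪s, x⟫)))
        = ∫ x, x ∂((μ.map X).tilted (fun x => ⟪s', x⟫))) :
    (μ.map X).tilted (fun x => ⟪s, x⟫) = (μ.map X).tilted (fun x => ⟪s', x⟫) := by
  have := Measure.isProbabilityMeasure_map (μ := μ) hX.aemeasurable
  have hexp (t : EuclideanSpace ℝ (Fin d)) (ht : Integrable (fun ω ↦ exp ⟪t, X ω⟫) μ) :
      Integrable (fun x ↦ exp (innerSL ℝ t x)) (μ.map X) :=
    (integrable_map_measure (by fun_prop) hX.aemeasurable).2 ht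
  exact tilted_eq_of_integral_tilted_eq (innerSL ℝ s) (innerSL ℝ s') (hexp s hs) (hexp s' hs')
    hms hms' hmean
end

section
/- Let (X_n)_{n=0}^N be a Galton–Watson branching process with offspring CGF K_Y and X₀ = x₀ fixed. Then K_{X₁,…,X_N | X₀=x₀}(s₁,…,s_N) = x₀·K_Y(s₁ + K_Y(s₂ + ⋯ + K_Y(s_{N−1} + K_Y(s_N))⋯)), whenever the nested expressions lie in the domain of K_Y. -/
/-!
Let `𝓕ₘ` be the σ-algebra generated by the offspring numbers of generations `≤ m`. Then `X_m` is
`𝓕ₘ`-measurable and the next row `(Y_{m+1,j})_j` is independent of `𝓕ₘ`, so splitting on the value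
`k` of `X_m` and using `E[exp (v ∑_{j<k} Y_{m+1,j})] = exp (k K_Y(v))` gives, for every
`𝓕ₘ`-measurable `S`,
`E[exp (S + v X_{m+1})] = E[exp (S + K_Y(v) X_m)]`.
Applying this from the last generation backwards absorbs each coefficient `s_m` into the argument
of the next `K_Y`, and after `N` steps the exponent is the constant `x₀ K_Y(u_{N-1})`. Computing
with lower integrals of `exp` postpones every integrability question to the final logarithm.
-/

open MeasureTheory ProbabilityTheory Real

open scoped ENNReal

section RandomIndex

variable {Ω ι : Type*} {mΩ : MeasurableSpace Ω} {μ : Measure Ω}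

lemma tsum_indicator_preimage_singleton (Z : Ω → ι) (F : ι → Ω → ℝ≥0∞) (ω : Ω) :
    ∑' k, (Z ⁻¹' {k}).indicator (F k) ω = F (Z ω) ω := by
  rw [tsum_eq_single (Z ω) fun k hk =>
    Set.indicator_of_notMem (s := Z ⁻¹' {k}) (fun h => hk h.symm) (F k)]
  exact Set.indicator_of_mem (s := Z ⁻¹' {Z ω}) rfl (F (Z ω))

variable [Countable ι] [MeasurableSpace ι] [MeasurableSingletonClass ι]

lemma lintegral_comp_eq_tsum_setLIntegral {Z : Ω → ι} (hZ : Measurable Z)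
    {F : ι → Ω → ℝ≥0∞} (hF : ∀ k, Measurable (F k)) :
    ∫⁻ ω, F (Z ω) ω ∂μ = ∑' k, ∫⁻ ω in Z ⁻¹' {k}, F k ω ∂μ := by
  simp_rw [← tsum_indicator_preimage_singleton Z F,
    ← lintegral_indicator (hZ (measurableSet_singleton _))]
  exact lintegral_tsum fun k => ((hF k).indicator (hZ (measurableSet_singleton k))).aemeasurable

lemma lintegral_mul_comp_of_indep {𝓕 𝓖 : MeasurableSpace Ω} (h𝓕 : 𝓕 ≤ mΩ) (h𝓖 : 𝓖 ≤ mΩ)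
    (hind : Indep 𝓕 𝓖 μ) {G : Ω → ℝ≥0∞} (hG : Measurable[𝓕] G) {Z : Ω → ι}
    (hZ : Measurable[𝓕] Z) {W : ι → Ω → ℝ≥0∞} (hW : ∀ k, Measurable[𝓖] (W k)) :
    ∫⁻ ω, G ω * W (Z ω) ω ∂μ = ∫⁻ ω, G ω * ∫⁻ ω', W (Z ω) ω' ∂μ ∂μ := by
  have hZ' : Measurable[mΩ] Z := hZ.mono h𝓕 le_rfl
  have hG' : Measurable[mΩ] G := hG.mono h𝓕 le_rfl
  rw [lintegral_comp_eq_tsum_setLIntegral (F := fun k ω => G ω * W k ω) hZ'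
      fun k => hG'.mul ((hW k).mono h𝓖 le_rfl),
    lintegral_comp_eq_tsum_setLIntegral (F := fun k ω => G ω * ∫⁻ ω', W k ω' ∂μ) hZ'
      fun k => hG'.mul_const _]
  refine tsum_congr fun k => ?_
  have hZk : MeasurableSet[𝓕] (Z ⁻¹' {k}) := hZ (measurableSet_singleton k)
  simp_rw [← lintegral_indicator (h𝓕 _ hZk), Set.indicator_mul_left]
  rw [lintegral_mul_eq_lintegral_mul_lintegral_of_independent_measurableSpace h𝓕 h𝓖 hind
      (hG.indicator hZk) (hW k),
    lintegral_mul_const _ ((hG.indicator hZk).mono h𝓕 le_rfl)]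

lemma log_integral_exp_of_lintegral_eq {f : Ω → ℝ} (hf : AEStronglyMeasurable f μ) {c : ℝ}
    (h : ∫⁻ ω, ENNReal.ofReal (exp (f ω)) ∂μ = ENNReal.ofReal (exp c)) :
    log (∫ ω, exp (f ω) ∂μ) = c := by
  rw [integral_eq_lintegral_of_nonneg_ae (ae_of_all _ fun ω => (exp_pos _).le)
      (continuous_exp.comp_aestronglyMeasurable hf), h, ENNReal.toReal_ofReal (exp_pos c).le,
    log_exp]

end RandomIndex

lemma measurable_sum_range_comp {α : Type*} {mα : MeasurableSpace α} {f : ℕ → α → ℕ}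
    (hf : ∀ j, Measurable (f j)) {Z : α → ℕ} (hZ : Measurable Z) :
    Measurable fun a => ∑ j ∈ Finset.range (Z a), f j a :=
  (measurable_from_prod_countable_left (f := fun p : α × ℕ => ∑ j ∈ Finset.range p.2, f j p.1)
    fun k => Finset.measurable_sum (Finset.range k) fun j _ => hf j).comp (measurable_id.prodMk hZ)

section GaltonWatson

variable {Ω : Type*} {Y : ℕ → ℕ → Ω → ℕ}

abbrev offspringSigma (Y : ℕ → ℕ → Ω → ℕ) (S : Set ℕ) : MeasurableSpace Ω :=
  ⨆ p ∈ Prod.fst ⁻¹' S, MeasurableSpace.comap (Y p.1 p.2) inferInstance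

lemma measurable_offspringSigma {S : Set ℕ} {n : ℕ} (hn : n ∈ S) (j : ℕ) :
    Measurable[offspringSigma Y S] (Y n j) :=
  Measurable.of_comap_le <| le_iSup₂ (f := fun (p : ℕ × ℕ) (_ : p ∈ Prod.fst ⁻¹' S) =>
    MeasurableSpace.comap (Y p.1 p.2) inferInstance) (n, j) hn

lemma measurable_generation {X : ℕ → Ω → ℕ} {x₀ : ℕ} (hX0 : ∀ ω, X 0 ω = x₀)
    (hXrec : ∀ n ω, X (n + 1) ω = ∑ j ∈ Finset.range (X n ω), Y (n + 1) j ω) {n m : ℕ}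
    (hnm : n ≤ m) : Measurable[offspringSigma Y (Set.Iic m)] (X n) := by
  induction n with
  | zero => simp only [funext hX0, measurable_const]
  | succ n ih =>
    rw [funext (hXrec n)]
    exact measurable_sum_range_comp (fun j => measurable_offspringSigma (Set.mem_Iic.mpr hnm) j)
      (ih (by omega))

variable [MeasurableSpace Ω] {μ : Measure Ω}

lemma offspringSigma_le (hY : ∀ n j, Measurable (Y n j)) (S : Set ℕ) :
    offspringSigma Y S ≤ ‹MeasurableSpace Ω› :=
  iSup₂_le fun p _ => (hY p.1 p.2).comap_le

lemma indep_offspringSigma (hY : ∀ n j, Measurable (Y n j))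
    (hindep : iIndepFun (fun p : ℕ × ℕ => Y p.1 p.2) μ) {S T : Set ℕ} (hST : Disjoint S T) :
    Indep (offspringSigma Y S) (offspringSigma Y T) μ :=
  indep_iSup_of_disjoint (m := fun p : ℕ × ℕ => MeasurableSpace.comap (Y p.1 p.2) inferInstance)
    (fun p => (hY p.1 p.2).comap_le) ((iIndepFun_iff_iIndep _ _ μ).mp hindep) (hST.preimage _)

lemma lintegral_exp_mul_sum_offspring (hY : ∀ n j, Measurable (Y n j))
    (hindep : iIndepFun (fun p : ℕ × ℕ => Y p.1 p.2) μ)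
    (hident : ∀ n j, μ.map (Y n j) = μ.map (Y 0 0)) {t : ℝ}
    (ht : Integrable (fun ω => exp (t * (Y 0 0 ω : ℝ))) μ) (n k : ℕ) :
    ∫⁻ ω, ENNReal.ofReal (exp (t * ∑ j ∈ Finset.range k, (Y n j ω : ℝ))) ∂μ
      = ENNReal.ofReal (exp (k * cgf (fun ω => (Y 0 0 ω : ℝ)) μ t)) := by
  have := hindep.isProbabilityMeasure
  set Z : ℕ → Ω → ℝ := fun j ω => (Y n j ω : ℝ)
  have hZ : ∀ j, Measurable (Z j) := fun j => measurable_from_top.comp (hY n j)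
  have hZindep : iIndepFun Z μ :=
    (hindep.precomp (Prod.mk_right_injective n)).comp _ fun _ => measurable_from_top
  have hZident : ∀ j, IdentDistrib (Z j) (fun ω => (Y 0 0 ω : ℝ)) μ μ := fun j =>
    (IdentDistrib.mk (hY n j).aemeasurable (hY 0 0).aemeasurable (hident n j)).comp
      measurable_from_top
  have hsum : ∀ ω, ∑ j ∈ Finset.range k, (Y n j ω : ℝ) = (∑ j ∈ Finset.range k, Z j) ω :=
    fun ω => (Finset.sum_apply ω _ Z).symm
  simp_rw [hsum]
  rw [← ofReal_integral_eq_lintegral_ofReal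
      (hZindep.integrable_exp_mul_sum hZ fun j _ =>
        ((hZident j).comp (measurable_const_mul t).exp).integrable_iff.mpr ht)
      (ae_of_all _ fun ω => (exp_pos _).le)]
  change ENNReal.ofReal (mgf _ μ t) = _
  rw [hZindep.mgf_sum hZ,
    Finset.prod_congr rfl fun j _ => mgf_congr_of_identDistrib _ _ (hZident j) t,
    Finset.prod_const, Finset.card_range, cgf, exp_nat_mul, exp_log (mgf_pos ht)]

variable {X : ℕ → Ω → ℕ} {x₀ : ℕ}

lemma lintegral_exp_add_next_generation (hY : ∀ n j, Measurable (Y n j))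
    (hindep : iIndepFun (fun p : ℕ × ℕ => Y p.1 p.2) μ)
    (hident : ∀ n j, μ.map (Y n j) = μ.map (Y 0 0)) (hX0 : ∀ ω, X 0 ω = x₀)
    (hXrec : ∀ n ω, X (n + 1) ω = ∑ j ∈ Finset.range (X n ω), Y (n + 1) j ω) {m : ℕ}
    {S : Ω → ℝ} (hS : Measurable[offspringSigma Y (Set.Iic m)] S) {v : ℝ}
    (hv : Integrable (fun ω => exp (v * (Y 0 0 ω : ℝ))) μ) :
    ∫⁻ ω, ENNReal.ofReal (exp (S ω + v * X (m + 1) ω)) ∂μ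
      = ∫⁻ ω, ENNReal.ofReal (exp (S ω + cgf (fun ω => (Y 0 0 ω : ℝ)) μ v * X m ω)) ∂μ := by
  have hdisj : Disjoint (Set.Iic m) {m + 1} := by simp
  have hW : ∀ k, Measurable[offspringSigma Y {m + 1}]
      fun ω => ENNReal.ofReal (exp (v * ∑ j ∈ Finset.range k, (Y (m + 1) j ω : ℝ))) := fun k =>
    ENNReal.measurable_ofReal.comp <| measurable_exp.comp <| measurable_const.mul <|
      Finset.measurable_sum _ fun j _ =>
        measurable_from_top.comp (measurable_offspringSigma (Set.mem_singleton _) j)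
  simp_rw [exp_add, ENNReal.ofReal_mul (exp_pos _).le, hXrec m, Nat.cast_sum]
  rw [lintegral_mul_comp_of_indep (offspringSigma_le hY _) (offspringSigma_le hY _)
      (indep_offspringSigma hY hindep hdisj)
      (G := fun ω => ENNReal.ofReal (exp (S ω))) (measurable_exp.comp hS).ennreal_ofReal
      (measurable_generation hX0 hXrec le_rfl) hW]
  simp_rw [lintegral_exp_mul_sum_offspring hY hindep hident hv, mul_comm]

lemma lintegral_exp_sum_generations (hY : ∀ n j, Measurable (Y n j))
    (hindep : iIndepFun (fun p : ℕ × ℕ => Y p.1 p.2) μ)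
    (hident : ∀ n j, μ.map (Y n j) = μ.map (Y 0 0)) (hX0 : ∀ ω, X 0 ω = x₀)
    (hXrec : ∀ n ω, X (n + 1) ω = ∑ j ∈ Finset.range (X n ω), Y (n + 1) j ω) (s : ℕ → ℝ)
    (m : ℕ) {w : ℕ → ℝ} (hw : ∀ k, w (k + 1) = s (m - k) + cgf (fun ω => (Y 0 0 ω : ℝ)) μ (w k))
    (hdom : ∀ k ≤ m, Integrable (fun ω => exp (w k * (Y 0 0 ω : ℝ))) μ) :
    ∫⁻ ω, ENNReal.ofReal
        (exp (∑ n ∈ Finset.range m, s (n + 1) * X (n + 1) ω + w 0 * X (m + 1) ω)) ∂μ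
      = ENNReal.ofReal (exp (x₀ * cgf (fun ω => (Y 0 0 ω : ℝ)) μ (w m))) := by
  have := hindep.isProbabilityMeasure
  have hS : ∀ m, Measurable[offspringSigma Y (Set.Iic m)]
      fun ω => ∑ n ∈ Finset.range m, s (n + 1) * (X (n + 1) ω : ℝ) := fun m =>
    Finset.measurable_sum _ fun n hn => measurable_const.mul
      (measurable_from_top.comp (measurable_generation hX0 hXrec (Finset.mem_range.mp hn)))
  induction m generalizing w with
  | zero =>
    rw [lintegral_exp_add_next_generation hY hindep hident hX0 hXrec (hS 0) (hdom 0 le_rfl)]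
    simp [hX0, mul_comm]
  | succ m ih =>
    rw [lintegral_exp_add_next_generation hY hindep hident hX0 hXrec (hS (m + 1))
      (hdom 0 (Nat.zero_le _))]
    have hregroup : ∀ ω, ∑ n ∈ Finset.range (m + 1), s (n + 1) * (X (n + 1) ω : ℝ)
          + cgf (fun ω => (Y 0 0 ω : ℝ)) μ (w 0) * X (m + 1) ω
        = ∑ n ∈ Finset.range m, s (n + 1) * (X (n + 1) ω : ℝ) + w 1 * X (m + 1) ω := by
      intro ω
      rw [Finset.sum_range_succ, hw 0, Nat.sub_zero]
      ring
    simp_rw [hregroup]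
    exact ih (w := fun k => w (k + 1)) (fun k => by simpa using hw (k + 1))
      (fun k hk => hdom (k + 1) (by omega))

end GaltonWatson

theorem cgf_galton_watson_sample_path_general
    {Ω : Type*} [MeasurableSpace Ω] (μ : Measure Ω)
    (Y : ℕ → ℕ → Ω → ℕ) (hY : ∀ n j, Measurable (Y n j))
    (hindep : iIndepFun (fun p : ℕ × ℕ => Y p.1 p.2) μ)
    (hident : ∀ n j, μ.map (Y n j) = μ.map (Y 0 0))
    (x₀ : ℕ) (X : ℕ → Ω → ℕ)
    (hX0 : ∀ ω, X 0 ω = x₀)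
    (hXrec : ∀ n ω, X (n + 1) ω = ∑ j ∈ Finset.range (X n ω), Y (n + 1) j ω)
    (N : ℕ) (hN : 1 ≤ N) (s : ℕ → ℝ)
    (u : ℕ → ℝ) (hu0 : u 0 = s N)
    (hurec : ∀ k, u (k + 1) = s (N - 1 - k) + cgf (fun ω => (Y 0 0 ω : ℝ)) μ (u k))
    (hdom : ∀ k < N, Integrable (fun ω => Real.exp (u k * (Y 0 0 ω : ℝ))) μ) :
    Real.log (∫ ω, Real.exp (∑ n ∈ Finset.range N, s (n + 1) * (X (n + 1) ω : ℝ)) ∂μ)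
      = x₀ * cgf (fun ω => (Y 0 0 ω : ℝ)) μ (u (N - 1)) := by
  obtain ⟨M, rfl⟩ : ∃ M, N = M + 1 := ⟨N - 1, by omega⟩
  have hX : ∀ n, Measurable (X n) := fun n =>
    (measurable_generation hX0 hXrec le_rfl).mono (offspringSigma_le hY _) le_rfl
  refine log_integral_exp_of_lintegral_eq (by fun_prop) ?_
  simp_rw [Finset.sum_range_succ _ M, ← hu0, Nat.add_sub_cancel]
  exact lintegral_exp_sum_generations hY hindep hident hX0 hXrec s M
    (fun k => by rw [hurec, Nat.add_sub_cancel]) (fun k hk => hdom k (by omega))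

/-- For a Galton–Watson branching process `X_n = ∑_{j=1}^{X_{n-1}} Y_n^{(j)}`
started from `X₀ = x₀`, with offspring CGF `K_Y`, the joint CGF of `(X₁,…,X_N)` given
`X₀ = x₀` is the nested expression
`x₀·K_Y(s₁ + K_Y(s₂ + ⋯ + K_Y(s_{N−1} + K_Y(s_N))⋯))`, whenever the nested arguments
(encoded by the backward recursion `u 0 = s_N`, `u (k+1) = s_{N-1-k} + K_Y(u k)`)
lie in the domain of `K_Y`. -/
theorem cgf_galton_watson_sample_path
    {Ω : Type*} [MeasurableSpace Ω] (μ : Measure Ω) [IsProbabilityMeasure μ]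
    (Y : ℕ → ℕ → Ω → ℕ) (hY : ∀ n j, Measurable (Y n j))
    (hindep : iIndepFun (fun p : ℕ × ℕ => Y p.1 p.2) μ)
    (hident : ∀ n j, μ.map (Y n j) = μ.map (Y 0 0))
    (x₀ : ℕ) (X : ℕ → Ω → ℕ)
    (hX0 : ∀ ω, X 0 ω = x₀)
    (hXrec : ∀ n ω, X (n + 1) ω = ∑ j ∈ Finset.range (X n ω), Y (n + 1) j ω)
    (N : ℕ) (hN : 1 ≤ N) (s : ℕ → ℝ)
    (u : ℕ → ℝ) (hu0 : u 0 = s N)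
    (hurec : ∀ k, u (k + 1) = s (N - 1 - k) + cgf (fun ω => (Y 0 0 ω : ℝ)) μ (u k))
    (hdom : ∀ k < N, Integrable (fun ω => Real.exp (u k * (Y 0 0 ω : ℝ))) μ) :
    Real.log (∫ ω, Real.exp (∑ n ∈ Finset.range N, s (n + 1) * (X (n + 1) ω : ℝ)) ∂μ)
      = x₀ * cgf (fun ω => (Y 0 0 ω : ℝ)) μ (u (N - 1)) :=
  cgf_galton_watson_sample_path_general μ Y hY hindep hident x₀ X hX0 hXrec N hN s u hu0 hurec hdom
end

section
/- Let R be an ℝ^D-valued random variable with cumulant generating function K_R finite on an open set. Then either the Hessian K_R''(s) is singular for every s in the interior of the domain (which happens exactly when R is supported on an affine hyperplane of dimension ≤ D−1), or K_R''(s) is positive definite for every such s. -/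
/-!
On the interior of the domain, `K_R` can be differentiated twice under the integral sign: near `s`,
`(1 + ‖r‖₁)² e^{x ⬝ᵥ r}` is dominated by a multiple of the sum of `e^{(s + c) ⬝ᵥ r}` over the
corners `c` of a small cube, and each of these is integrable. The Hessian at `s` is then the
covariance matrix of `R` under the tilted measure `μ.tilted (s ⬝ᵥ R ·)`, with quadratic form
`v ↦ Var[v ⬝ᵥ R]`. This vanishes iff `v ⬝ᵥ R` is almost surely constant under the tilted measure,
equivalently under `μ`, the two measures being mutually absolutely continuous. That condition does
not involve `s`, so the positive semidefinite Hessian is singular either at every `s` or at none.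
-/

open MeasureTheory Real Filter Metric Finset ProbabilityTheory Topology
open scoped Matrix

section ExpBounds

variable {ι : Type*} [Fintype ι] [DecidableEq ι]

lemma one_add_le_inv_mul_exp {δ : ℝ} (hδ : 0 < δ) (hδ₁ : δ ≤ 1) (u : ℝ) :
    1 + u ≤ δ⁻¹ * exp (δ * u) := by
  rw [le_inv_mul_iff₀ hδ]
  nlinarith [add_one_le_exp (δ * u)]

lemma exp_mul_abs_le_sum (a y : ℝ) :
    exp (a * |y|) ≤ ∑ b ∈ ({a, -a} : Finset ℝ), exp (b * y) := by
  have hle : ∀ b ∈ ({a, -a} : Finset ℝ), exp (b * y) ≤ ∑ b ∈ ({a, -a} : Finset ℝ), exp (b * y) :=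
    fun b hb ↦ single_le_sum (f := fun b ↦ exp (b * y)) (fun _ _ ↦ (exp_pos _).le) hb
  rcases abs_choice y with h | h
  · simpa [h] using hle a (by simp)
  · simpa [h] using hle (-a) (by simp)

lemma exp_mul_sum_abs_le (a : ℝ) (r : ι → ℝ) :
    exp (a * ∑ i, |r i|) ≤
      ∑ c ∈ Fintype.piFinset fun _ ↦ ({a, -a} : Finset ℝ), exp (c ⬝ᵥ r) :=
  calc exp (a * ∑ i, |r i|) = ∏ i, exp (a * |r i|) := by rw [mul_sum, exp_sum]
    _ ≤ ∏ i, ∑ b ∈ ({a, -a} : Finset ℝ), exp (b * r i) :=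
      prod_le_prod (fun _ _ ↦ (exp_pos _).le) fun i _ ↦ exp_mul_abs_le_sum a (r i)
    _ = _ := by rw [prod_univ_sum]; simp only [dotProduct, exp_sum]

lemma one_add_sq_mul_exp_dotProduct_le {δ : ℝ} (hδ : 0 < δ) (hδ₁ : δ ≤ 1) {s x : ι → ℝ}
    (hx : ∀ i, |x i - s i| ≤ δ) (r : ι → ℝ) :
    (1 + ∑ i, |r i|) ^ 2 * exp (x ⬝ᵥ r) ≤
      δ⁻¹ ^ 2 * ∑ c ∈ Fintype.piFinset fun _ ↦ ({3 * δ, -(3 * δ)} : Finset ℝ),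
        exp ((s + c) ⬝ᵥ r) := by
  set u := ∑ i, |r i|
  have hu : 0 ≤ u := sum_nonneg fun i _ ↦ abs_nonneg _
  have hdot : x ⬝ᵥ r ≤ s ⬝ᵥ r + δ * u := by
    have : (x - s) ⬝ᵥ r ≤ δ * u := by
      rw [mul_sum]
      refine sum_le_sum fun i _ ↦ (le_abs_self _).trans ?_
      rw [Pi.sub_apply, abs_mul]
      gcongr
      exact hx i
    rwa [sub_dotProduct, sub_le_iff_le_add'] at this
  calc (1 + u) ^ 2 * exp (x ⬝ᵥ r) ≤ (δ⁻¹ * exp (δ * u)) ^ 2 * exp (s ⬝ᵥ r + δ * u) := by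
        gcongr
        exact one_add_le_inv_mul_exp hδ hδ₁ u
    _ = δ⁻¹ ^ 2 * (exp (s ⬝ᵥ r) * exp (3 * δ * u)) := by
        rw [mul_pow, ← exp_nat_mul, mul_assoc, ← exp_add, ← exp_add]
        ring_nf
    _ ≤ δ⁻¹ ^ 2 * (exp (s ⬝ᵥ r) *
          ∑ c ∈ Fintype.piFinset fun _ ↦ ({3 * δ, -(3 * δ)} : Finset ℝ), exp (c ⬝ᵥ r)) := by
        gcongr
        exact exp_mul_sum_abs_le _ r
    _ = _ := by simp only [mul_sum, add_dotProduct, exp_add]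

end ExpBounds

section Covariance

variable {ι Ω : Type*} [Fintype ι] [MeasurableSpace Ω] {ν : Measure Ω} {X : Ω → ι → ℝ}

noncomputable def covarianceMatrix (X : Ω → ι → ℝ) (ν : Measure Ω) : Matrix ι ι ℝ :=
  .of fun i j ↦ cov[(X · i), (X · j); ν]

lemma dotProduct_covarianceMatrix_mulVec [IsFiniteMeasure ν] (hX : ∀ i, MemLp (X · i) 2 ν)
    (v : ι → ℝ) :
    v ⬝ᵥ covarianceMatrix X ν *ᵥ v = Var[(v ⬝ᵥ X ·); ν] := by
  have hvX : ∀ i, MemLp (fun ω ↦ v i * X ω i) 2 ν := fun i ↦ (hX i).const_mul (v i)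
  calc v ⬝ᵥ covarianceMatrix X ν *ᵥ v
      = ∑ i, ∑ j, cov[fun ω ↦ v i * X ω i, fun ω ↦ v j * X ω j; ν] := by
        simp only [dotProduct, Matrix.mulVec, covarianceMatrix, Matrix.of_apply,
          covariance_const_mul_left, covariance_const_mul_right, mul_sum]
        refine sum_congr rfl fun i _ ↦ sum_congr rfl fun j _ ↦ ?_
        ring
    _ = cov[(v ⬝ᵥ X ·), (v ⬝ᵥ X ·); ν] := (covariance_fun_sum_fun_sum hvX hvX).symm
    _ = Var[(v ⬝ᵥ X ·); ν] := covariance_self (memLp_finsetSum _ fun i _ ↦ hvX i).aemeasurable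

lemma posSemidef_covarianceMatrix [IsFiniteMeasure ν] (hX : ∀ i, MemLp (X · i) 2 ν) :
    (covarianceMatrix X ν).PosSemidef := by
  refine .of_dotProduct_mulVec_nonneg ?_ fun v ↦ ?_
  · ext i j
    exact covariance_comm _ _
  · rw [star_trivial, dotProduct_covarianceMatrix_mulVec hX]
    exact variance_nonneg _ _

lemma variance_eq_zero_iff [IsProbabilityMeasure ν] {Y : Ω → ℝ} (hY : MemLp Y 2 ν) :
    Var[Y; ν] = 0 ↔ ∃ c, ∀ᵐ ω ∂ν, Y ω = c := by
  refine ⟨fun h ↦ ⟨_, ae_eq_integral_of_variance_eq_zero hY h⟩, fun ⟨c, hc⟩ ↦ ?_⟩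
  rw [variance_congr hc]
  simp [variance_eq_integral]

open scoped ComplexOrder in
lemma Matrix.PosSemidef.det_eq_zero_iff {n 𝕜 : Type*} [Fintype n] [DecidableEq n] [RCLike 𝕜]
    {A : Matrix n n 𝕜} (hA : A.PosSemidef) :
    A.det = 0 ↔ ∃ v ≠ 0, star v ⬝ᵥ A *ᵥ v = 0 := by
  rw [← not_iff_not, ← ne_eq, ← hA.posDef_iff_det_ne_zero, Matrix.posDef_iff_dotProduct_mulVec]
  simp only [not_exists, not_and, hA.isHermitian, true_and]
  exact forall₂_congr fun v _ ↦ ⟨fun h ↦ h.ne', (hA.dotProduct_mulVec_nonneg v).lt_of_ne'⟩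

lemma det_covarianceMatrix_eq_zero_iff [DecidableEq ι] [IsProbabilityMeasure ν]
    (hX : ∀ i, MemLp (X · i) 2 ν) :
    (covarianceMatrix X ν).det = 0 ↔ ∃ v c, v ≠ 0 ∧ ∀ᵐ ω ∂ν, v ⬝ᵥ X ω = c := by
  rw [(posSemidef_covarianceMatrix hX).det_eq_zero_iff]
  refine exists_congr fun v ↦ ?_
  have hvX : MemLp (v ⬝ᵥ X ·) 2 ν := memLp_finsetSum _ fun i _ ↦ (hX i).const_mul (v i)
  rw [star_trivial, dotProduct_covarianceMatrix_mulVec hX, variance_eq_zero_iff hvX,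
    exists_and_left]

end Covariance

section Domination

variable {ι Ω : Type*} [Fintype ι] [MeasurableSpace Ω] {μ : Measure Ω} {R : Ω → ι → ℝ}
  {s : ι → ℝ}

def integrableExpDotSet (R : Ω → ι → ℝ) (μ : Measure Ω) : Set (ι → ℝ) :=
  {s | Integrable (fun ω ↦ exp (s ⬝ᵥ R ω)) μ}

lemma integrable_exp_dotProduct_of_mem_interior (hs : s ∈ interior (integrableExpDotSet R μ)) :
    Integrable (fun ω ↦ exp (s ⬝ᵥ R ω)) μ :=
  interior_subset (s := integrableExpDotSet R μ) hs

lemma exists_integrable_bound_of_mem_interior (hs : s ∈ interior (integrableExpDotSet R μ)) :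
    ∃ δ > 0, ∃ g : Ω → ℝ, Integrable g μ ∧
      ∀ x ∈ ball s δ, ∀ ω, (1 + ∑ i, |R ω i|) ^ 2 * exp (x ⬝ᵥ R ω) ≤ g ω := by
  classical
  obtain ⟨ε, hε, hball⟩ := Metric.mem_nhds_iff.1 (mem_interior_iff_mem_nhds.1 hs)
  set δ := min (ε / 4) 1
  have hδ : 0 < δ := by positivity
  have hcorner : ∀ c ∈ Fintype.piFinset fun _ ↦ ({3 * δ, -(3 * δ)} : Finset ℝ),
      Integrable (fun ω ↦ exp ((s + c) ⬝ᵥ R ω)) μ := by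
    intro c hc
    refine hball (mem_ball.2 ((dist_pi_lt_iff hε).2 fun i ↦ ?_))
    have hci : |c i| = 3 * δ := by
      have hc' := Fintype.mem_piFinset.1 hc i
      simp only [mem_insert, mem_singleton] at hc'
      rcases hc' with h | h <;> simp [h, abs_of_pos hδ]
    rw [Real.dist_eq, Pi.add_apply, add_sub_cancel_left, hci]
    linarith [min_le_left (ε / 4) 1]
  refine ⟨δ, hδ, _, (integrable_finsetSum _ hcorner).const_mul (δ⁻¹ ^ 2), fun x hx ω ↦ ?_⟩
  refine one_add_sq_mul_exp_dotProduct_le hδ (min_le_right _ _) (fun i ↦ ?_) (R ω)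
  rw [← Real.dist_eq]
  exact (dist_le_pi_dist x s i).trans (mem_ball.1 hx).le

lemma integrable_mul_exp_dotProduct (hs : s ∈ interior (integrableExpDotSet R μ)) {φ : Ω → ℝ}
    (hφm : AEStronglyMeasurable φ μ) (hφ : ∀ ω, |φ ω| ≤ (1 + ∑ i, |R ω i|) ^ 2) :
    Integrable (fun ω ↦ φ ω * exp (s ⬝ᵥ R ω)) μ := by
  obtain ⟨δ, hδ, g, hg, hbound⟩ := exists_integrable_bound_of_mem_interior hs
  refine hg.mono' (hφm.mul (integrable_exp_dotProduct_of_mem_interior hs).aestronglyMeasurable)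
    (ae_of_all _ fun ω ↦ ?_)
  rw [norm_mul, Real.norm_eq_abs, Real.norm_of_nonneg (exp_pos _).le]
  exact (mul_le_mul_of_nonneg_right (hφ ω) (exp_pos _).le).trans (hbound s (mem_ball_self hδ) ω)

end Domination

section Derivative

variable {ι Ω : Type*} [Fintype ι] [MeasurableSpace Ω] {μ : Measure Ω} {R : Ω → ι → ℝ}
  {s : ι → ℝ}

lemma abs_apply_le_one_add_sum_abs (r : ι → ℝ) (i : ι) : |r i| ≤ 1 + ∑ j, |r j| :=
  (single_le_sum (f := fun j ↦ |r j|) (fun _ _ ↦ abs_nonneg _) (mem_univ i)).trans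
    (le_add_of_nonneg_left zero_le_one)

lemma hasFDerivAt_dotProduct_left (r x : ι → ℝ) :
    HasFDerivAt (fun y : ι → ℝ ↦ y ⬝ᵥ r)
      (∑ i, r i • (ContinuousLinearMap.proj i : (ι → ℝ) →L[ℝ] ℝ)) x := by
  convert (∑ i, r i • (ContinuousLinearMap.proj i : (ι → ℝ) →L[ℝ] ℝ)).hasFDerivAt
    using 1
  ext y
  simp [dotProduct, mul_comm]

lemma hasFDerivAt_const_mul_exp_dotProduct (a : ℝ) (r x : ι → ℝ) :
    HasFDerivAt (fun y ↦ a * exp (y ⬝ᵥ r))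
      (∑ i, (a * r i * exp (x ⬝ᵥ r)) • (ContinuousLinearMap.proj i : (ι → ℝ) →L[ℝ] ℝ)) x := by
  refine ((hasFDerivAt_dotProduct_left r x).exp.const_mul a).congr_fderiv ?_
  rw [smul_sum, smul_sum]
  refine sum_congr rfl fun i _ ↦ ?_
  rw [smul_smul, smul_smul]
  congr 1
  ring

lemma norm_sum_smul_proj_le (c : ι → ℝ) :
    ‖∑ i, c i • (ContinuousLinearMap.proj i : (ι → ℝ) →L[ℝ] ℝ)‖ ≤ ∑ i, |c i| := by
  refine (norm_sum_le _ _).trans (sum_le_sum fun i _ ↦ ?_)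
  rw [norm_smul, Real.norm_eq_abs]
  exact mul_le_of_le_one_right (abs_nonneg _)
    (ContinuousLinearMap.opNorm_le_bound _ zero_le_one fun v ↦ by simpa using norm_le_pi_norm v i)

lemma norm_sum_mul_exp_smul_proj_le {a : ℝ} {r : ι → ℝ} (ha : |a| ≤ 1 + ∑ i, |r i|)
    (x : ι → ℝ) :
    ‖∑ i, (a * r i * exp (x ⬝ᵥ r)) • (ContinuousLinearMap.proj i : (ι → ℝ) →L[ℝ] ℝ)‖ ≤
      (1 + ∑ i, |r i|) ^ 2 * exp (x ⬝ᵥ r) := by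
  refine (norm_sum_smul_proj_le _).trans ?_
  calc ∑ i, |a * r i * exp (x ⬝ᵥ r)| = |a| * (∑ i, |r i|) * exp (x ⬝ᵥ r) := by
        rw [mul_sum, sum_mul]
        refine sum_congr rfl fun i _ ↦ ?_
        rw [abs_mul, abs_mul, abs_of_pos (exp_pos _)]
    _ ≤ (1 + ∑ i, |r i|) ^ 2 * exp (x ⬝ᵥ r) := by
        have hr : 0 ≤ ∑ i, |r i| := sum_nonneg fun i _ ↦ abs_nonneg _
        gcongr
        nlinarith [abs_nonneg a]

theorem hasFDerivAt_integral_mul_exp_dotProduct (hR : Measurable R) {φ : Ω → ℝ}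
    (hφm : Measurable φ) (hφ : ∀ ω, |φ ω| ≤ 1 + ∑ i, |R ω i|)
    (hs : s ∈ interior (integrableExpDotSet R μ)) :
    HasFDerivAt (fun x ↦ ∫ ω, φ ω * exp (x ⬝ᵥ R ω) ∂μ)
      (∑ i, (∫ ω, φ ω * R ω i * exp (s ⬝ᵥ R ω) ∂μ) •
        (ContinuousLinearMap.proj i : (ι → ℝ) →L[ℝ] ℝ)) s := by
  obtain ⟨δ, hδ, g, hg, hbound⟩ := exists_integrable_bound_of_mem_interior hs
  have hRi : ∀ i, Measurable fun ω ↦ R ω i := fun i ↦ (measurable_pi_apply i).comp hR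
  have hexp : ∀ x : ι → ℝ, Measurable fun ω ↦ exp (x ⬝ᵥ R ω) := fun x ↦
    measurable_exp.comp (Finset.measurable_sum _ fun i _ ↦ measurable_const.mul (hRi i))
  have hint : ∀ i, Integrable (fun ω ↦ φ ω * R ω i * exp (s ⬝ᵥ R ω)) μ := fun i ↦
    integrable_mul_exp_dotProduct hs (hφm.mul (hRi i)).aestronglyMeasurable fun ω ↦ by
      rw [abs_mul, sq]
      exact mul_le_mul (hφ ω) (abs_apply_le_one_add_sum_abs (R ω) i) (abs_nonneg _)
        ((abs_nonneg _).trans (hφ ω))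
  have key := hasFDerivAt_integral_of_dominated_of_fderiv_le (μ := μ) (bound := g)
    (F := fun x ω ↦ φ ω * exp (x ⬝ᵥ R ω))
    (F' := fun x ω ↦
      ∑ i, (φ ω * R ω i * exp (x ⬝ᵥ R ω)) • (ContinuousLinearMap.proj i : (ι → ℝ) →L[ℝ] ℝ))
    (ball_mem_nhds s hδ)
    (Eventually.of_forall fun x ↦ (hφm.mul (hexp x)).aestronglyMeasurable)
    (integrable_mul_exp_dotProduct hs hφm.aestronglyMeasurable fun ω ↦
      (hφ ω).trans (le_self_pow₀ (le_add_of_nonneg_right (sum_nonneg fun i _ ↦ abs_nonneg _))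
        two_ne_zero))
    (Finset.aestronglyMeasurable_fun_sum _ fun i _ ↦
      (((hφm.mul (hRi i)).mul (hexp s)).aestronglyMeasurable.smul_const _))
    (ae_of_all _ fun ω x hx ↦
      (norm_sum_mul_exp_smul_proj_le (hφ ω) x).trans (hbound x hx ω))
    hg (ae_of_all _ fun ω x _ ↦ hasFDerivAt_const_mul_exp_dotProduct (φ ω) (R ω) x)
  refine key.congr_fderiv ?_
  rw [integral_finsetSum _ fun i _ ↦ (hint i).smul_const _]
  simp_rw [integral_smul_const]

end Derivative

section Tilted

variable {Ω : Type*} [MeasurableSpace Ω] {μ : Measure Ω}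

lemma integral_tilted_eq_div (f g : Ω → ℝ) :
    ∫ ω, g ω ∂μ.tilted f = (∫ ω, g ω * exp (f ω) ∂μ) / ∫ ω, exp (f ω) ∂μ := by
  rw [integral_tilted, ← integral_div]
  congr with ω
  rw [smul_eq_mul, div_mul_eq_mul_div, mul_comm]

lemma ae_tilted_iff {f : Ω → ℝ} (hf : Integrable (fun ω ↦ exp (f ω)) μ) {p : Ω → Prop} :
    (∀ᵐ ω ∂μ.tilted f, p ω) ↔ ∀ᵐ ω ∂μ, p ω :=
  ⟨fun h ↦ (absolutelyContinuous_tilted hf).ae_le h,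
    fun h ↦ (tilted_absolutelyContinuous μ f).ae_le h⟩

end Tilted

section CumulantGeneratingFunction

variable {ι Ω : Type*} [Fintype ι] [MeasurableSpace Ω] {μ : Measure Ω}
  {R : Ω → ι → ℝ} {s : ι → ℝ}

noncomputable def vectorCgf (R : Ω → ι → ℝ) (μ : Measure Ω) (s : ι → ℝ) : ℝ :=
  log (∫ ω, exp (s ⬝ᵥ R ω) ∂μ)

noncomputable def hessianMatrix [DecidableEq ι] (f : (ι → ℝ) → ℝ) (s : ι → ℝ) : Matrix ι ι ℝ :=
  .of fun i j ↦ fderiv ℝ (fun x ↦ fderiv ℝ f x (Pi.single j 1)) s (Pi.single i 1)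

lemma hasFDerivAt_integral_exp_dotProduct (hR : Measurable R)
    (hs : s ∈ interior (integrableExpDotSet R μ)) :
    HasFDerivAt (fun x ↦ ∫ ω, exp (x ⬝ᵥ R ω) ∂μ)
      (∑ i, (∫ ω, R ω i * exp (s ⬝ᵥ R ω) ∂μ) • (ContinuousLinearMap.proj i : (ι → ℝ) →L[ℝ] ℝ))
      s := by
  simpa using hasFDerivAt_integral_mul_exp_dotProduct hR (φ := fun _ ↦ 1) measurable_const
    (fun ω ↦ by simpa using sum_nonneg fun i _ ↦ abs_nonneg (R ω i)) hs

lemma hasFDerivAt_vectorCgf [NeZero μ] (hR : Measurable R)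
    (hs : s ∈ interior (integrableExpDotSet R μ)) :
    HasFDerivAt (vectorCgf R μ) ((∫ ω, exp (s ⬝ᵥ R ω) ∂μ)⁻¹ •
      ∑ i, (∫ ω, R ω i * exp (s ⬝ᵥ R ω) ∂μ) • (ContinuousLinearMap.proj i : (ι → ℝ) →L[ℝ] ℝ))
      s :=
  (hasFDerivAt_integral_exp_dotProduct hR hs).log
    (integral_exp_pos (integrable_exp_dotProduct_of_mem_interior hs)).ne'

lemma fderiv_vectorCgf_single [DecidableEq ι] [NeZero μ] (hR : Measurable R)
    (hs : s ∈ interior (integrableExpDotSet R μ)) (j : ι) :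
    fderiv ℝ (vectorCgf R μ) s (Pi.single j 1) =
      (∫ ω, R ω j * exp (s ⬝ᵥ R ω) ∂μ) / ∫ ω, exp (s ⬝ᵥ R ω) ∂μ := by
  rw [(hasFDerivAt_vectorCgf hR hs).fderiv]
  simp [Pi.single_apply, div_eq_inv_mul]

lemma hessianMatrix_vectorCgf_apply [DecidableEq ι] [NeZero μ] (hR : Measurable R)
    (hs : s ∈ interior (integrableExpDotSet R μ)) (i j : ι) :
    hessianMatrix (vectorCgf R μ) s i j =
      (∫ ω, R ω i * R ω j * exp (s ⬝ᵥ R ω) ∂μ) / (∫ ω, exp (s ⬝ᵥ R ω) ∂μ) -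
        (∫ ω, R ω i * exp (s ⬝ᵥ R ω) ∂μ) / (∫ ω, exp (s ⬝ᵥ R ω) ∂μ) *
          ((∫ ω, R ω j * exp (s ⬝ᵥ R ω) ∂μ) / ∫ ω, exp (s ⬝ᵥ R ω) ∂μ) := by
  have hZ := integral_exp_pos (integrable_exp_dotProduct_of_mem_interior hs)
  have hgrad : (fun x ↦ fderiv ℝ (vectorCgf R μ) x (Pi.single j 1)) =ᶠ[𝓝 s]
      fun x ↦ (∫ ω, R ω j * exp (x ⬝ᵥ R ω) ∂μ) * (∫ ω, exp (x ⬝ᵥ R ω) ∂μ)⁻¹ :=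
    eventually_of_mem (isOpen_interior.mem_nhds hs) fun x hx ↦
      (fderiv_vectorCgf_single hR hx j).trans (div_eq_mul_inv _ _)
  have hN := hasFDerivAt_integral_mul_exp_dotProduct hR ((measurable_pi_apply j).comp hR)
    (fun ω ↦ abs_apply_le_one_add_sum_abs (R ω) j) hs
  have hZinv :=
    (hasDerivAt_inv hZ.ne').comp_hasFDerivAt s (hasFDerivAt_integral_exp_dotProduct hR hs)
  have hquot : HasFDerivAt (fun x ↦ (∫ ω, R ω j * exp (x ⬝ᵥ R ω) ∂μ) *
      (∫ ω, exp (x ⬝ᵥ R ω) ∂μ)⁻¹) _ s := hN.mul hZinv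
  have hcomm : ∫ ω, R ω j * R ω i * exp (s ⬝ᵥ R ω) ∂μ =
      ∫ ω, R ω i * R ω j * exp (s ⬝ᵥ R ω) ∂μ := by
    simp_rw [mul_comm (R _ j) (R _ i)]
  rw [hessianMatrix, Matrix.of_apply, hgrad.fderiv_eq, hquot.fderiv]
  simp [Pi.single_apply, hcomm]
  field_simp
  ring

lemma memLp_two_tilted_dotProduct (hR : Measurable R)
    (hs : s ∈ interior (integrableExpDotSet R μ)) (i : ι) :
    MemLp (R · i) 2 (μ.tilted (s ⬝ᵥ R ·)) := by
  have hRi : Measurable (R · i) := (measurable_pi_apply i).comp hR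
  rw [memLp_two_iff_integrable_sq hRi.aestronglyMeasurable,
    integrable_tilted_iff (integrable_exp_dotProduct_of_mem_interior hs)]
  have := integrable_mul_exp_dotProduct hs (hRi.pow_const 2).aestronglyMeasurable fun ω ↦ by
    rw [abs_pow]
    exact pow_le_pow_left₀ (abs_nonneg _) (abs_apply_le_one_add_sum_abs (R ω) i) 2
  simpa only [smul_eq_mul, mul_comm] using this

theorem hessianMatrix_vectorCgf [DecidableEq ι] [NeZero μ] (hR : Measurable R)
    (hs : s ∈ interior (integrableExpDotSet R μ)) :
    hessianMatrix (vectorCgf R μ) s = covarianceMatrix R (μ.tilted (s ⬝ᵥ R ·)) := by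
  have := isProbabilityMeasure_tilted (integrable_exp_dotProduct_of_mem_interior hs)
  ext i j
  rw [hessianMatrix_vectorCgf_apply hR hs, covarianceMatrix, Matrix.of_apply,
    covariance_eq_sub (memLp_two_tilted_dotProduct hR hs i) (memLp_two_tilted_dotProduct hR hs j),
    integral_tilted_eq_div, integral_tilted_eq_div, integral_tilted_eq_div]
  rfl

end CumulantGeneratingFunction

section Dichotomy

variable {ι Ω : Type*} [Fintype ι] [DecidableEq ι] [MeasurableSpace Ω] {μ : Measure Ω} [NeZero μ]
  {R : Ω → ι → ℝ} {s : ι → ℝ}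

lemma posSemidef_hessianMatrix_vectorCgf (hR : Measurable R)
    (hs : s ∈ interior (integrableExpDotSet R μ)) :
    (hessianMatrix (vectorCgf R μ) s).PosSemidef := by
  have := isProbabilityMeasure_tilted (integrable_exp_dotProduct_of_mem_interior hs)
  rw [hessianMatrix_vectorCgf hR hs]
  exact posSemidef_covarianceMatrix (memLp_two_tilted_dotProduct hR hs)

lemma det_hessianMatrix_vectorCgf_eq_zero_iff (hR : Measurable R)
    (hs : s ∈ interior (integrableExpDotSet R μ)) :
    (hessianMatrix (vectorCgf R μ) s).det = 0 ↔ ∃ v c, v ≠ 0 ∧ ∀ᵐ ω ∂μ, v ⬝ᵥ R ω = c := by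
  have hexp := integrable_exp_dotProduct_of_mem_interior hs
  have := isProbabilityMeasure_tilted hexp
  simp only [hessianMatrix_vectorCgf hR hs,
    det_covarianceMatrix_eq_zero_iff (memLp_two_tilted_dotProduct hR hs), ae_tilted_iff hexp]

end Dichotomy

/-- Let `R` be an `ℝ^D`-valued random variable whose CGF
`K_R(s) = log E[e^{s·R}]` is finite on a nonempty open set. Then either the Hessian `K_R''(s)`
is singular for every `s` in the interior of the domain — which happens exactly when `R` is
supported on an affine hyperplane — or `K_R''(s)` is positive definite for every such `s`. -/
theorem cgf_hessian_dichotomy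
    {Ω : Type*} [MeasurableSpace Ω] (μ : Measure Ω) [IsProbabilityMeasure μ]
    {D : ℕ} (R : Ω → Fin D → ℝ) (hR : Measurable R)
    (hopen : (interior {s : Fin D → ℝ |
        Integrable (fun ω => Real.exp (∑ i, s i * R ω i)) μ}).Nonempty) :
    ((∀ s ∈ interior {s : Fin D → ℝ |
          Integrable (fun ω => Real.exp (∑ i, s i * R ω i)) μ},
        (Matrix.of fun i j =>
          fderiv ℝ (fun x =>
            fderiv ℝ (fun y => Real.log (∫ ω, Real.exp (∑ i, y i * R ω i) ∂μ)) x
              (Pi.single j 1)) s (Pi.single i 1)).det = 0)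
      ∨ (∀ s ∈ interior {s : Fin D → ℝ |
            Integrable (fun ω => Real.exp (∑ i, s i * R ω i)) μ},
          (Matrix.of fun i j =>
            fderiv ℝ (fun x =>
              fderiv ℝ (fun y => Real.log (∫ ω, Real.exp (∑ i, y i * R ω i) ∂μ)) x
                (Pi.single j 1)) s (Pi.single i 1)).PosDef))
    ∧ ((∀ s ∈ interior {s : Fin D → ℝ |
          Integrable (fun ω => Real.exp (∑ i, s i * R ω i)) μ},
        (Matrix.of fun i j =>
          fderiv ℝ (fun x =>
            fderiv ℝ (fun y => Real.log (∫ ω, Real.exp (∑ i, y i * R ω i) ∂μ)) x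
              (Pi.single j 1)) s (Pi.single i 1)).det = 0)
      ↔ ∃ (v : Fin D → ℝ) (c : ℝ), v ≠ 0 ∧ ∀ᵐ ω ∂μ, ∑ i, v i * R ω i = c) := by
  obtain ⟨s₀, hs₀⟩ := hopen
  have hdet := fun s (hs : s ∈ interior (integrableExpDotSet R μ)) ↦
    det_hessianMatrix_vectorCgf_eq_zero_iff hR hs
  refine ⟨?_, fun h ↦ (hdet s₀ hs₀).1 (h s₀ hs₀), fun h s hs ↦ (hdet s hs).2 h⟩
  by_cases hP : ∃ (v : Fin D → ℝ) (c : ℝ), v ≠ 0 ∧ ∀ᵐ ω ∂μ, v ⬝ᵥ R ω = c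
  · exact .inl fun s hs ↦ (hdet s hs).2 hP
  · exact .inr fun s hs ↦ (posSemidef_hessianMatrix_vectorCgf hR hs).posDef_iff_det_ne_zero.2
      fun h ↦ hP ((hdet s hs).1 h)
end
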